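/- arXiv:1309.6283 — 6 statements merged into one kernel-verified Lean document; each statement's English description precedes it below -/
import Mathlib

section
/- Every map p ∈ E_b(Ω,φ) is Borel measurable, and the pushforward operator ψp : X* → X* defined by (ψp μ)(e) = μ(p⁻¹e) for Borel sets e ⊆ Ω belongs to Γ(Ω,φ). -/
open MeasureTheory Filter Topology

/-- The pairing `⟨f, μ⟩ = ∫ f dμ` of a function with a finite signed Borel measure,
defined via the Jordan decomposition of the signed measure. -/
noncomputable def spair {Ω : Type*} [MeasurableSpace Ω] (f : Ω → ℝ) (μ : SignedMeasure Ω) : ℝ :=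
  (∫ ω, f ω ∂μ.toJordanDecomposition.posPart) - (∫ ω, f ω ∂μ.toJordanDecomposition.negPart)

/-- The weak* topology on the space `X*` of finite signed Borel measures, i.e. the topology
of convergence of the pairings with all continuous functions `x ∈ C(Ω, ℝ)`. With this topology
on the codomain, the product topology on `SignedMeasure Ω → SignedMeasure Ω` is precisely the
weak* operator topology (pointwise convergence with `X*` in its weak* topology). -/
noncomputable instance weakStarTopology {Ω : Type*} [TopologicalSpace Ω] [MeasurableSpace Ω] :
    TopologicalSpace (SignedMeasure Ω) :=
  TopologicalSpace.induced (fun μ => fun x : C(Ω, ℝ) => spair (⇑x) μ) inferInstance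

/-- The operator `V : X* → X*`, pushforward by `φ`: `(Vμ)(e) = μ(φ⁻¹ e)`. -/
noncomputable def Vop {Ω : Type*} [MeasurableSpace Ω] (φ : Ω → Ω) :
    SignedMeasure Ω → SignedMeasure Ω :=
  fun μ => μ.map φ

/-- The Dirac measure at `ω`, as a signed measure. -/
noncomputable def diracSM {Ω : Type*} [MeasurableSpace Ω] (ω : Ω) : SignedMeasure Ω :=
  (Measure.dirac ω).toSignedMeasure

/-- `Γ(Ω,φ)`: the closure of `{Vⁿ : n ≥ 0}` in the weak* operator topology. -/
def GammaSG {Ω : Type*} [TopologicalSpace Ω] [MeasurableSpace Ω] (φ : Ω → Ω) :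
    Set (SignedMeasure Ω → SignedMeasure Ω) :=
  closure (Set.range fun n : ℕ => (Vop φ)^[n])

/-- `G(Ω,φ)`: the closure of the convex hull of `{Vⁿ : n ≥ 0}` in the weak* operator topology. -/
def GSG {Ω : Type*} [TopologicalSpace Ω] [MeasurableSpace Ω] (φ : Ω → Ω) :
    Set (SignedMeasure Ω → SignedMeasure Ω) :=
  closure (convexHull ℝ (Set.range fun n : ℕ => (Vop φ)^[n]))

/-- The kernel `L = {Q ∈ G(Ω,φ) : V ∘ Q = Q}` of the semigroup `G(Ω,φ)`. -/
def Lker {Ω : Type*} [TopologicalSpace Ω] [MeasurableSpace Ω] (φ : Ω → Ω) :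
    Set (SignedMeasure Ω → SignedMeasure Ω) :=
  {Q ∈ GSG φ | Vop φ ∘ Q = Q}

/-- The Ellis enveloping semigroup `E(Ω,φ)`: the closure of the iterates `{φⁿ : n ≥ 0}`
in the product topology (pointwise convergence) on `Ω → Ω`. -/
def EllisE {Ω : Type*} [TopologicalSpace Ω] (φ : Ω → Ω) : Set (Ω → Ω) :=
  closure (Set.range fun n : ℕ => φ^[n])

/-- `E_b(Ω,φ)`: the smallest set of self-maps of `Ω` containing the iterates `{φⁿ : n ≥ 0}`
and sequentially closed under pointwise convergence. -/
inductive Eb {Ω : Type*} [TopologicalSpace Ω] (φ : Ω → Ω) : (Ω → Ω) → Prop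
  | iterate (n : ℕ) : Eb φ φ^[n]
  | lim (p : ℕ → Ω → Ω) (q : Ω → Ω) (hp : ∀ k, Eb φ (p k))
      (hq : ∀ ω, Tendsto (fun k => p k ω) atTop (𝓝 (q ω))) : Eb φ q

/-- `E₁(Ω,φ)`: the set of pointwise limits of sequences of iterates `φ^{n_k}`. -/
def E1SG {Ω : Type*} [TopologicalSpace Ω] (φ : Ω → Ω) : Set (Ω → Ω) :=
  {p | ∃ n : ℕ → ℕ, ∀ ω, Tendsto (fun k => φ^[n k] ω) atTop (𝓝 (p ω))}

/-- An operator `P ∈ Γ(Ω,φ)` with `p = πP` is regular if `p` is Borel measurable and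
`(Pμ)(e) = μ(p⁻¹ e)` for every Borel probability measure `μ` and Borel set `e`. -/
def RegularOperator {Ω : Type*} [TopologicalSpace Ω] [MeasurableSpace Ω]
    (P : SignedMeasure Ω → SignedMeasure Ω) (p : Ω → Ω) : Prop :=
  Measurable p ∧ ∀ (μ : Measure Ω) [IsProbabilityMeasure μ],
    ∀ e : Set Ω, MeasurableSet e → P μ.toSignedMeasure e = (μ (p ⁻¹' e)).toReal

/-- A minimal set of the semicascade `(Ω,φ)`: a nonempty closed `φ`-invariant set containing
no proper nonempty closed `φ`-invariant subset. -/
def IsMinimalSet {Ω : Type*} [TopologicalSpace Ω] (φ : Ω → Ω) (m : Set Ω) : Prop :=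
  m.Nonempty ∧ IsClosed m ∧ Set.MapsTo φ m m ∧
    ∀ m' ⊆ m, m'.Nonempty → IsClosed m' → Set.MapsTo φ m' m' → m' = m

/-- The orbit closure of a point `ω`: the closure of the trajectory `{φⁿ ω : n ≥ 0}`. -/
def orbitClosure {Ω : Type*} [TopologicalSpace Ω] (φ : Ω → Ω) (ω : Ω) : Set Ω :=
  closure (Set.range fun n : ℕ => φ^[n] ω)

/-- A `φ`-ergodic measure: a `φ`-invariant Borel probability measure `μ` such that
`μ(e) ∈ {0,1}` for every Borel set `e` with `φ⁻¹ e = e`. -/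
def IsErgodicMeasure {Ω : Type*} [MeasurableSpace Ω] (φ : Ω → Ω) (μ : Measure Ω) : Prop :=
  IsProbabilityMeasure μ ∧ (∀ e : Set Ω, MeasurableSet e → μ (φ ⁻¹' e) = μ e) ∧
    (∀ e : Set Ω, MeasurableSet e → φ ⁻¹' e = e → μ e = 0 ∨ μ e = 1)

/-- The support of a Borel measure: the smallest closed set of full measure
(the intersection of all closed sets of full measure). -/
def msupp {Ω : Type*} [TopologicalSpace Ω] [MeasurableSpace Ω] (μ : Measure Ω) : Set Ω :=
  ⋂₀ {s : Set Ω | IsClosed s ∧ μ sᶜ = 0}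

/-- The semicascade `(Ω,φ)` is tame: for every continuous `x` and every strictly increasing
sequence `n(1) < n(2) < ⋯`, the infimum over finitely supported real coefficients `a` with
`Σ|aₖ| = 1` of the sup-norms `‖Σₖ aₖ · (x ∘ φ^{n(k)})‖` is `0`. -/
def Tame {Ω : Type*} [TopologicalSpace Ω] [CompactSpace Ω] (φ : Ω → Ω)
    (hφ : Continuous φ) : Prop :=
  ∀ (x : C(Ω, ℝ)) (n : ℕ → ℕ), StrictMono n →
    sInf {r : ℝ | ∃ a : ℕ →₀ ℝ, (∑ k ∈ a.support, |a k|) = 1 ∧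
      r = ‖∑ k ∈ a.support, a k • x.comp ⟨φ^[n k], hφ.iterate (n k)⟩‖} = 0

/-- Points `a, b` are proximal: `inf_{n ≥ 0} d(φⁿ a, φⁿ b) = 0`. -/
def Proximal {Ω : Type*} [PseudoMetricSpace Ω] (φ : Ω → Ω) (a b : Ω) : Prop :=
  (⨅ n : ℕ, dist (φ^[n] a) (φ^[n] b)) = 0

variable {Ω : Type*} [TopologicalSpace Ω] [CompactSpace Ω] [TopologicalSpace.MetrizableSpace Ω]
  [Nonempty Ω] [MeasurableSpace Ω] [BorelSpace Ω]

/-!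
Induction along the definition of `E_b`. Pointwise limits of measurable maps into a metrizable
space are measurable. If `p k → q` pointwise, then for every continuous `x` and finite measure `ν`,
`∫ x ∘ p k dν → ∫ x ∘ q dν` by dominated convergence; applied to the two Jordan parts of `μ`, this
says that `μ ↦ μ.map (p k)` converges to `μ ↦ μ.map q` in the weak* operator topology. As
`μ ↦ μ.map φ^[n]` is `Vⁿ` and `Γ(Ω,φ)` is closed, the pushforward by every `p ∈ E_b` lies in it.
-/

open scoped BoundedContinuousFunction

namespace MeasureTheory

variable {α β γ : Type*} [MeasurableSpace α] [MeasurableSpace β] [MeasurableSpace γ]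

theorem VectorMeasure.map_map {M : Type*} [AddCommMonoid M] [TopologicalSpace M]
    (v : VectorMeasure α M) {f : α → β} {g : β → γ} (hg : Measurable g) (hf : Measurable f) :
    (v.map f).map g = v.map (g ∘ f) :=
  VectorMeasure.ext fun s hs => by
    rw [map_apply _ hg hs, map_apply _ hf (hg hs), map_apply _ (hg.comp hf) hs,
      Set.preimage_comp]

theorem Measure.toSignedMeasure_map (μ : Measure α) [IsFiniteMeasure μ] {f : α → β}
    (hf : Measurable f) : (μ.map f).toSignedMeasure = μ.toSignedMeasure.map f :=
  VectorMeasure.ext fun s hs => by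
    rw [toSignedMeasure_apply_measurable hs, VectorMeasure.map_apply _ hf hs,
      toSignedMeasure_apply_measurable (hf hs), map_measureReal_apply hf hs]

theorem SignedMeasure.map_eq_sub (μ : SignedMeasure α) {f : α → β} (hf : Measurable f) :
    μ.map f = (μ.toJordanDecomposition.posPart.map f).toSignedMeasure -
      (μ.toJordanDecomposition.negPart.map f).toSignedMeasure := by
  conv_lhs => rw [← μ.toSignedMeasure_toJordanDecomposition]
  rw [JordanDecomposition.toSignedMeasure, Measure.toSignedMeasure_map _ hf,
    Measure.toSignedMeasure_map _ hf]
  exact map_sub (VectorMeasure.mapGm f) _ _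

theorem integral_sub_integral_eq_of_toSignedMeasure_sub_eq {ν₁ ν₂ ρ₁ ρ₂ : Measure α}
    [IsFiniteMeasure ν₁] [IsFiniteMeasure ν₂] [IsFiniteMeasure ρ₁] [IsFiniteMeasure ρ₂]
    (h : ν₁.toSignedMeasure - ν₂.toSignedMeasure = ρ₁.toSignedMeasure - ρ₂.toSignedMeasure)
    {f : α → ℝ} (hν₁ : Integrable f ν₁) (hν₂ : Integrable f ν₂) (hρ₁ : Integrable f ρ₁)
    (hρ₂ : Integrable f ρ₂) :
    ∫ a, f a ∂ν₁ - ∫ a, f a ∂ν₂ = ∫ a, f a ∂ρ₁ - ∫ a, f a ∂ρ₂ := by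
  have hsum : ν₁ + ρ₂ = ρ₁ + ν₂ := by
    rw [← Measure.toSignedMeasure_eq_toSignedMeasure_iff, Measure.toSignedMeasure_add,
      Measure.toSignedMeasure_add, ← sub_eq_sub_iff_add_eq_add, h]
  rw [sub_eq_sub_iff_add_eq_add, ← integral_add_measure hν₁ hρ₂,
    ← integral_add_measure hρ₁ hν₂, hsum]

theorem tendsto_integral_comp_of_tendsto {X Y : Type*} [MeasurableSpace X] [TopologicalSpace Y]
    [MeasurableSpace Y] [OpensMeasurableSpace Y] (f : Y →ᵇ ℝ) (ν : Measure X) [IsFiniteMeasure ν]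
    {p : ℕ → X → Y} {q : X → Y} (hp : ∀ k, Measurable (p k))
    (hpq : ∀ x, Tendsto (fun k => p k x) atTop (𝓝 (q x))) :
    Tendsto (fun k => ∫ x, f (p k x) ∂ν) atTop (𝓝 (∫ x, f (q x) ∂ν)) :=
  tendsto_integral_of_dominated_convergence (fun _ => ‖f‖)
    (fun k => (f.continuous.measurable.comp (hp k)).aestronglyMeasurable) (integrable_const _)
    (fun _ => .of_forall fun _ => f.norm_coe_le_norm _)
    (.of_forall fun x => (f.continuous.tendsto (q x)).comp (hpq x))

end MeasureTheory

section Pairing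

variable {X Y : Type*} [TopologicalSpace Y] [MeasurableSpace X] [MeasurableSpace Y]
  [OpensMeasurableSpace Y]

-- The Jordan decomposition of `μ.map p` is in general not the pushforward of that of `μ`.
theorem spair_eq_integral_sub_integral (f : Y →ᵇ ℝ) {μ : SignedMeasure Y} {ν₁ ν₂ : Measure Y}
    [IsFiniteMeasure ν₁] [IsFiniteMeasure ν₂]
    (h : μ = ν₁.toSignedMeasure - ν₂.toSignedMeasure) :
    spair f μ = ∫ y, f y ∂ν₁ - ∫ y, f y ∂ν₂ :=
  integral_sub_integral_eq_of_toSignedMeasure_sub_eq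
    (by rw [← h, ← JordanDecomposition.toSignedMeasure, μ.toSignedMeasure_toJordanDecomposition])
    (f.integrable _) (f.integrable _) (f.integrable _) (f.integrable _)

theorem spair_map (f : Y →ᵇ ℝ) (μ : SignedMeasure X) {p : X → Y} (hp : Measurable p) :
    spair f (μ.map p) = spair (f ∘ p) μ := by
  rw [spair_eq_integral_sub_integral f (μ.map_eq_sub hp),
    integral_map hp.aemeasurable f.continuous.aestronglyMeasurable,
    integral_map hp.aemeasurable f.continuous.aestronglyMeasurable]
  rfl

theorem tendsto_spair_comp_of_tendsto (f : Y →ᵇ ℝ) (μ : SignedMeasure X) {p : ℕ → X → Y}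
    {q : X → Y} (hp : ∀ k, Measurable (p k))
    (hpq : ∀ x, Tendsto (fun k => p k x) atTop (𝓝 (q x))) :
    Tendsto (fun k => spair (f ∘ p k) μ) atTop (𝓝 (spair (f ∘ q) μ)) :=
  (tendsto_integral_comp_of_tendsto f _ hp hpq).sub (tendsto_integral_comp_of_tendsto f _ hp hpq)

end Pairing

theorem Vop_iterate_apply {X : Type*} [MeasurableSpace X] {φ : X → X} (hφ : Measurable φ)
    (n : ℕ) (μ : SignedMeasure X) :
    (Vop φ)^[n] μ = μ.map φ^[n] := by
  induction n with
  | zero => exact μ.map_id.symm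
  | succ n ih =>
    rw [Function.iterate_succ_apply', ih, Vop, VectorMeasure.map_map _ hφ (hφ.iterate n),
      ← Function.iterate_succ']

section WeakStar

variable {X : Type*} [TopologicalSpace X] [MeasurableSpace X]

theorem tendsto_weakStar_iff {ι : Type*} {l : Filter ι} {u : ι → SignedMeasure X}
    {μ : SignedMeasure X} :
    Tendsto u l (𝓝 μ) ↔ ∀ x : C(X, ℝ), Tendsto (fun i => spair x (u i)) l (𝓝 (spair x μ)) := by
  rw [nhds_induced, tendsto_comap_iff, tendsto_pi_nhds]
  rfl

theorem tendsto_map_of_tendsto [CompactSpace X] [OpensMeasurableSpace X] {p : ℕ → X → X}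
    {q : X → X} (hp : ∀ k, Measurable (p k)) (hq : Measurable q)
    (hpq : ∀ x, Tendsto (fun k => p k x) atTop (𝓝 (q x))) :
    Tendsto (fun k (μ : SignedMeasure X) => μ.map (p k)) atTop (𝓝 fun μ => μ.map q) := by
  refine tendsto_pi_nhds.mpr fun μ => tendsto_weakStar_iff.mpr fun x => ?_
  have key := tendsto_spair_comp_of_tendsto (.mkOfCompact x) μ hp hpq
  rw [← spair_map _ μ hq] at key
  simp_rw [← spair_map _ μ (hp _)] at key
  exact key

end WeakStar

namespace Eb

variable {X : Type*} [TopologicalSpace X] [TopologicalSpace.PseudoMetrizableSpace X]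
  [MeasurableSpace X] [BorelSpace X] {φ : X → X}

theorem measurable (hφ : Measurable φ) {p : X → X} (hp : Eb φ p) : Measurable p := by
  induction hp with
  | iterate n => exact hφ.iterate n
  | lim p q _ hpq ih => exact measurable_of_tendsto_metrizable ih (tendsto_pi_nhds.mpr hpq)

theorem map_mem_gammaSG [CompactSpace X] (hφ : Measurable φ) {p : X → X} (hp : Eb φ p) :
    (fun μ : SignedMeasure X => μ.map p) ∈ GammaSG φ := by
  induction hp with
  | iterate n => exact subset_closure ⟨n, funext (Vop_iterate_apply hφ n)⟩
  | lim p q hp hpq ih =>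
    exact isClosed_closure.mem_of_tendsto
      (tendsto_map_of_tendsto (fun k => (hp k).measurable hφ)
        ((Eb.lim p q hp hpq).measurable hφ) hpq) (.of_forall ih)

end Eb

/-- Lemma 1.6: every `p ∈ E_b(Ω,φ)` is Borel measurable, and the pushforward operator
`ψp : X* → X*`, `(ψp μ)(e) = μ(p⁻¹ e)`, belongs to `Γ(Ω,φ)`. -/
theorem stmt_2 (φ : Ω → Ω) (hφ : Continuous φ) (p : Ω → Ω) (hp : Eb φ p) :
    Measurable p ∧
    (∀ (μ : SignedMeasure Ω) (e : Set Ω), MeasurableSet e → (μ.map p) e = μ (p ⁻¹' e)) ∧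
    (fun μ : SignedMeasure Ω => μ.map p) ∈ GammaSG φ :=
  ⟨hp.measurable hφ.measurable,
    fun μ _ he => VectorMeasure.map_apply μ (hp.measurable hφ.measurable) he,
    hp.map_mem_gammaSG hφ.measurable⟩
end

section
/- Let λ be a Borel probability measure on the compact space Γ(Ω,φ) that is ergodic with respect to the continuous map P ↦ V∘P, let ω ∈ Ω, and let μ be a Borel probability measure on Ω such that ∫ x dμ = ∫_{Γ(Ω,φ)} ⟨x, Pδ(ω)⟩ dλ(P) for every x ∈ C(Ω,ℝ). Then μ is φ-invariant and φ-ergodic. -/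
/-!
Every `P ∈ Γ(Ω,φ)` sends `δ(ω)` to a Dirac measure: `Vⁿ δ(ω) = δ(φⁿ ω)`, and the Dirac measures
form a weak*-closed copy of `Ω`. Writing `P δ(ω) = δ((πP)(ω))`, the Borel map `P ↦ (πP)(ω)`
intertwines `P ↦ V ∘ P` with `φ` on `Γ(Ω,φ)`, and testing against continuous functions shows that
`μ` is the image of `λ` under it. The image of an ergodic measure under such a factor map is
invariant and ergodic.
-/

open MeasureTheory Filter Topology

/-- The Borel σ-algebra on the space of operators `X* → X*` with the weak* operator topology. -/
noncomputable instance funBorel {Ω : Type*} [TopologicalSpace Ω] [MeasurableSpace Ω] :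
    MeasurableSpace (SignedMeasure Ω → SignedMeasure Ω) :=
  borel _

variable {Ω : Type*} [TopologicalSpace Ω] [CompactSpace Ω] [TopologicalSpace.MetrizableSpace Ω]
  [Nonempty Ω] [MeasurableSpace Ω] [BorelSpace Ω]

namespace PreErgodic

variable {α : Type*} [MeasurableSpace α] {F : α → α} {lam : Measure α}

theorem of_conull_invariant [IsProbabilityMeasure lam] {S : Set α} (hSm : MeasurableSet S)
    (hS : lam Sᶜ = 0) (hFS : Set.MapsTo F S S)
    (herg : ∀ h : Set α, MeasurableSet h → h ⊆ S → {a ∈ S | F a ∈ h} = h →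
      lam h = 0 ∨ lam h = 1) : PreErgodic F lam where
  aeconst_set s hs hFs := by
    have hinv : {a ∈ S | F a ∈ S ∩ s} = S ∩ s := by
      ext a
      refine ⟨fun ⟨ha, _, hFa⟩ => ⟨ha, ?_⟩, fun ⟨ha, has⟩ => ⟨ha, hFS ha, ?_⟩⟩
      · rwa [← hFs]
      · rwa [← hFs] at has
    have hae : (S ∩ s : Set α) =ᵐ[lam] s := inter_ae_eq_right_of_ae_eq_univ (ae_eq_univ.mpr hS)
    rw [eventuallyConst_set']
    rcases herg _ (hSm.inter hs) Set.inter_subset_left hinv with h0 | h1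
    · exact .inl (hae.symm.trans (ae_eq_empty.mpr h0))
    · refine .inr (hae.symm.trans (ae_eq_univ.mpr ?_))
      exact (prob_compl_eq_zero_iff (hSm.inter hs)).mpr h1

end PreErgodic

theorem Ergodic.map_of_ae_semiconj {α β : Type*} [MeasurableSpace α] [MeasurableSpace β]
    {F : α → α} {f : β → β} {π : α → β} {lam : Measure α} (hF : Ergodic F lam)
    (hπ : Measurable π) (hf : Measurable f) (hconj : π ∘ F =ᵐ[lam] f ∘ π) :
    Ergodic f (lam.map π) where
  measurable := hf
  map_eq := by
    rw [Measure.map_map hf hπ, ← Measure.map_congr hconj, ← Measure.map_map hπ hF.measurable,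
      hF.map_eq]
  aeconst_set s hs hfs := by
    rw [← (hπ.measurePreserving lam).aeconst_preimage hs.nullMeasurableSet]
    refine hF.quasiErgodic.aeconst_set₀ (hπ hs).nullMeasurableSet ?_
    filter_upwards [hconj] with a ha
    change (π (F a) ∈ s) = (π a ∈ s)
    rw [show π (F a) = f (π a) from ha, ← Set.mem_preimage, hfs]

section SignedMeasure

variable {α : Type*} [MeasurableSpace α]

theorem Measure.ext_of_forall_integral_continuousMap [TopologicalSpace α]
    [TopologicalSpace.PseudoMetrizableSpace α] [BorelSpace α] {a b : Measure α}
    [IsFiniteMeasure a] [IsFiniteMeasure b] (h : ∀ x : C(α, ℝ), ∫ z, x z ∂a = ∫ z, x z ∂b) :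
    a = b :=
  ext_of_forall_integral_eq_of_IsFiniteMeasure fun f => h f.toContinuousMap

theorem Measure.toSignedMeasure_sub_eq_iff {a b c d : Measure α} [IsFiniteMeasure a]
    [IsFiniteMeasure b] [IsFiniteMeasure c] [IsFiniteMeasure d] :
    a.toSignedMeasure - b.toSignedMeasure = c.toSignedMeasure - d.toSignedMeasure ↔
      a + d = c + b := by
  rw [← Measure.toSignedMeasure_eq_toSignedMeasure_iff, Measure.toSignedMeasure_add,
    Measure.toSignedMeasure_add, sub_eq_sub_iff_add_eq_add]

theorem Measure.toSignedMeasure_map {β : Type*} [MeasurableSpace β] (m : Measure α)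
    [IsFiniteMeasure m] {f : α → β} (hf : Measurable f) :
    m.toSignedMeasure.map f = (m.map f).toSignedMeasure := by
  ext e he
  rw [VectorMeasure.map_apply _ hf he, Measure.toSignedMeasure_apply_measurable (hf he),
    Measure.toSignedMeasure_apply_measurable he, measureReal_def, measureReal_def,
    Measure.map_apply hf he]

theorem SignedMeasure.toSignedMeasure_posPart_sub_negPart (ν : SignedMeasure α) :
    ν.toJordanDecomposition.posPart.toSignedMeasure
      - ν.toJordanDecomposition.negPart.toSignedMeasure = ν :=
  ν.toSignedMeasure_toJordanDecomposition

theorem diracSM_injective [MeasurableSpace.SeparatesPoints α] :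
    Function.Injective (diracSM : α → SignedMeasure α) := fun _ _ h =>
  injective_dirac (Measure.toSignedMeasure_eq_toSignedMeasure_iff.mp h)

theorem Vop_diracSM {φ : α → α} (hφ : Measurable φ) (z : α) :
    Vop φ (diracSM z) = diracSM (φ z) := by
  rw [Vop, diracSM, diracSM, Measure.toSignedMeasure_map _ hφ]
  exact Measure.toSignedMeasure_congr (Measure.map_dirac' hφ z)

theorem iterate_Vop_diracSM {φ : α → α} (hφ : Measurable φ) (n : ℕ) (z : α) :
    (Vop φ)^[n] (diracSM z) = diracSM (φ^[n] z) := by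
  induction n with
  | zero => rfl
  | succ n ih =>
    rw [Function.iterate_succ_apply', ih, Vop_diracSM hφ, Function.iterate_succ_apply']

end SignedMeasure

section Pairing

variable {α : Type*} [TopologicalSpace α] [CompactSpace α] [MeasurableSpace α]
  [OpensMeasurableSpace α]

theorem ContinuousMap.integral_add_measure (x : C(α, ℝ)) (a b : Measure α) [IsFiniteMeasure a]
    [IsFiniteMeasure b] : ∫ z, x z ∂(a + b) = ∫ z, x z ∂a + ∫ z, x z ∂b :=
  MeasureTheory.integral_add_measure
    (x.continuous.integrable_of_hasCompactSupport (.of_compactSpace _))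
    (x.continuous.integrable_of_hasCompactSupport (.of_compactSpace _))

theorem spair_toSignedMeasure_sub (x : C(α, ℝ)) (a b : Measure α) [IsFiniteMeasure a]
    [IsFiniteMeasure b] :
    spair x (a.toSignedMeasure - b.toSignedMeasure) = ∫ z, x z ∂a - ∫ z, x z ∂b := by
  set ν := a.toSignedMeasure - b.toSignedMeasure
  have hadd : ν.toJordanDecomposition.posPart + b = a + ν.toJordanDecomposition.negPart :=
    Measure.toSignedMeasure_sub_eq_iff.mp ν.toSignedMeasure_toJordanDecomposition
  have := congrArg (fun m => ∫ z, x z ∂m) hadd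
  simp only [x.integral_add_measure] at this
  unfold spair
  linarith

theorem spair_toSignedMeasure (x : C(α, ℝ)) (m : Measure α) [IsFiniteMeasure m] :
    spair x m.toSignedMeasure = ∫ z, x z ∂m := by
  simpa using spair_toSignedMeasure_sub x m 0

theorem spair_diracSM (x : C(α, ℝ)) (z : α) : spair x (diracSM z) = x z := by
  rw [diracSM, spair_toSignedMeasure, integral_dirac' _ _ x.continuous.stronglyMeasurable]

theorem spair_injective [TopologicalSpace.PseudoMetrizableSpace α] [BorelSpace α] :
    Function.Injective fun (ν : SignedMeasure α) (x : C(α, ℝ)) => spair x ν := by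
  intro μ ν h
  have hx (x : C(α, ℝ)) : spair x μ = spair x ν := congrFun h x
  unfold spair at hx
  rw [← SignedMeasure.toSignedMeasure_posPart_sub_negPart μ,
    ← SignedMeasure.toSignedMeasure_posPart_sub_negPart ν, Measure.toSignedMeasure_sub_eq_iff]
  refine Measure.ext_of_forall_integral_continuousMap fun x => ?_
  rw [x.integral_add_measure, x.integral_add_measure]
  linarith [hx x]

end Pairing

section WeakStar

theorem continuous_spair {α : Type*} [TopologicalSpace α] [MeasurableSpace α] (x : C(α, ℝ)) :
    Continuous fun ν : SignedMeasure α => spair x ν :=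
  (continuous_apply x).comp
    (continuous_induced_dom : Continuous fun (ν : SignedMeasure α) (y : C(α, ℝ)) => spair y ν)

theorem continuous_of_continuous_spair {α β : Type*} [TopologicalSpace α] [MeasurableSpace α]
    [TopologicalSpace β] {f : β → SignedMeasure α}
    (h : ∀ x : C(α, ℝ), Continuous fun b => spair x (f b)) : Continuous f :=
  continuous_induced_rng.mpr (continuous_pi h)

variable {α : Type*} [TopologicalSpace α] [CompactSpace α] [MeasurableSpace α]

theorem continuous_diracSM [OpensMeasurableSpace α] :
    Continuous (diracSM : α → SignedMeasure α) :=
  continuous_of_continuous_spair fun x => by simpa only [spair_diracSM] using x.continuous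

variable [BorelSpace α]

theorem spair_Vop (x : C(α, ℝ)) {φ : α → α} (hφ : Continuous φ) (ν : SignedMeasure α) :
    spair x (Vop φ ν) = spair (x.comp ⟨φ, hφ⟩) ν := by
  rw [← SignedMeasure.toSignedMeasure_posPart_sub_negPart ν, Vop,
    ← VectorMeasure.mapGm_apply, map_sub, VectorMeasure.mapGm_apply, VectorMeasure.mapGm_apply,
    Measure.toSignedMeasure_map _ hφ.measurable, Measure.toSignedMeasure_map _ hφ.measurable,
    spair_toSignedMeasure_sub, spair_toSignedMeasure_sub,
    integral_map hφ.aemeasurable x.continuous.aestronglyMeasurable,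
    integral_map hφ.aemeasurable x.continuous.aestronglyMeasurable]
  rfl

theorem continuous_Vop {φ : α → α} (hφ : Continuous φ) : Continuous (Vop φ) :=
  continuous_of_continuous_spair fun x => by
    simpa only [spair_Vop x hφ] using continuous_spair (x.comp ⟨φ, hφ⟩)

theorem continuous_Vop_comp {φ : α → α} (hφ : Continuous φ) :
    Continuous fun T : SignedMeasure α → SignedMeasure α => Vop φ ∘ T :=
  continuous_pi fun ν => (continuous_Vop hφ).comp (continuous_apply ν)

variable [TopologicalSpace.PseudoMetrizableSpace α]

instance : T2Space (SignedMeasure α) :=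
  (Topology.IsEmbedding.mk ⟨rfl⟩ spair_injective).t2Space

theorem isClosedEmbedding_diracSM [T1Space α] :
    Topology.IsClosedEmbedding (diracSM : α → SignedMeasure α) :=
  continuous_diracSM.isClosedEmbedding diracSM_injective

end WeakStar

section Enveloping

variable {α : Type*} [TopologicalSpace α] [CompactSpace α] [MeasurableSpace α] [BorelSpace α]
  {φ : α → α} {P : SignedMeasure α → SignedMeasure α}

theorem Vop_comp_mem_GammaSG (hφ : Continuous φ) (hP : P ∈ GammaSG φ) :
    Vop φ ∘ P ∈ GammaSG φ :=
  map_mem_closure (continuous_Vop_comp hφ) hP <| by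
    rintro _ ⟨n, rfl⟩
    exact ⟨n + 1, Function.iterate_succ' _ n⟩

theorem apply_diracSM_mem_range_of_mem_GammaSG [TopologicalSpace.PseudoMetrizableSpace α]
    [T1Space α] (hφ : Continuous φ) (hP : P ∈ GammaSG φ) (ω : α) :
    P (diracSM ω) ∈ Set.range diracSM := by
  rw [← isClosedEmbedding_diracSM.isClosed_range.closure_eq]
  refine map_mem_closure (f := fun T : SignedMeasure α → SignedMeasure α => T (diracSM ω))
    (continuous_apply _) hP ?_
  rintro _ ⟨n, rfl⟩
  exact ⟨φ^[n] ω, (iterate_Vop_diracSM hφ.measurable n ω).symm⟩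

end Enveloping

noncomputable instance {α : Type*} [TopologicalSpace α] [MeasurableSpace α] :
    MeasurableSpace (SignedMeasure α) :=
  borel _

instance {α : Type*} [TopologicalSpace α] [MeasurableSpace α] :
    BorelSpace (SignedMeasure α) :=
  ⟨rfl⟩

instance {α : Type*} [TopologicalSpace α] [MeasurableSpace α] :
    BorelSpace (SignedMeasure α → SignedMeasure α) :=
  ⟨rfl⟩

/-- `(πP)(ω)`, the point with `P δ(ω) = δ((πP)(ω))`; junk value `ω` when `P δ(ω)` is not a
Dirac measure. -/
noncomputable def diracImage {α : Type*} [MeasurableSpace α]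
    (P : SignedMeasure α → SignedMeasure α) (ω : α) : α :=
  Function.extend diracSM id (fun _ => ω) (P (diracSM ω))

section DiracImage

variable {α : Type*} [TopologicalSpace α] [CompactSpace α] [TopologicalSpace.MetrizableSpace α]
  [MeasurableSpace α] [BorelSpace α] {φ : α → α} {P : SignedMeasure α → SignedMeasure α}

theorem diracSM_diracImage (hφ : Continuous φ) (hP : P ∈ GammaSG φ) (ω : α) :
    diracSM (diracImage P ω) = P (diracSM ω) := by
  obtain ⟨z, hz⟩ := apply_diracSM_mem_range_of_mem_GammaSG hφ hP ω
  rw [diracImage, ← hz, diracSM_injective.extend_apply, id]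

theorem diracImage_Vop_comp (hφ : Continuous φ) (hP : P ∈ GammaSG φ) (ω : α) :
    diracImage (Vop φ ∘ P) ω = φ (diracImage P ω) :=
  diracSM_injective <| by
    rw [diracSM_diracImage hφ (Vop_comp_mem_GammaSG hφ hP), Function.comp_apply,
      ← diracSM_diracImage hφ hP, Vop_diracSM hφ.measurable]

theorem measurable_diracImage (ω : α) :
    Measurable fun P : SignedMeasure α → SignedMeasure α => diracImage P ω :=
  (isClosedEmbedding_diracSM.measurableEmbedding.measurable_extend measurable_id
    measurable_const).comp (continuous_apply (diracSM ω)).measurable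

end DiracImage

/-- Lemma 1.10: if `λ` is a Borel probability measure on `Γ(Ω,φ)` that is ergodic with
respect to `P ↦ V ∘ P`, `ω ∈ Ω`, and `μ` is the Borel probability measure with
`∫ x dμ = ∫_Γ ⟨x, Pδ(ω)⟩ dλ(P)` for all continuous `x`, then `μ` is `φ`-invariant
and `φ`-ergodic. -/
theorem stmt_5 (φ : Ω → Ω) (hφ : Continuous φ)
    (lam : Measure (SignedMeasure Ω → SignedMeasure Ω)) (hprob : IsProbabilityMeasure lam)
    (hconc : lam (GammaSG φ)ᶜ = 0)
    (hinv : lam.map (fun T => Vop φ ∘ T) = lam)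
    (herg : ∀ h : Set (SignedMeasure Ω → SignedMeasure Ω), MeasurableSet h →
      h ⊆ GammaSG φ → {P ∈ GammaSG φ | Vop φ ∘ P ∈ h} = h → lam h = 0 ∨ lam h = 1)
    (ω : Ω) (μ : Measure Ω) [IsProbabilityMeasure μ]
    (hμ : ∀ x : C(Ω, ℝ), (∫ ζ, x ζ ∂μ) = ∫ P, spair (⇑x) (P (diracSM ω)) ∂lam) :
    (∀ e : Set Ω, MeasurableSet e → μ (φ ⁻¹' e) = μ e) ∧
    (∀ e : Set Ω, MeasurableSet e → φ ⁻¹' e = e → μ e = 0 ∨ μ e = 1) := by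
  set π := fun P : SignedMeasure Ω → SignedMeasure Ω => diracImage P ω
  have hπ : Measurable π := measurable_diracImage ω
  have hΓ : ∀ᵐ P ∂lam, P ∈ GammaSG φ := hconc
  have hlam : Ergodic (fun T => Vop φ ∘ T) lam :=
    ⟨⟨(continuous_Vop_comp hφ).measurable, hinv⟩, .of_conull_invariant
      isClosed_closure.measurableSet hconc (fun _ => Vop_comp_mem_GammaSG hφ) herg⟩
  have hconj : π ∘ (fun T => Vop φ ∘ T) =ᵐ[lam] φ ∘ π := by
    filter_upwards [hΓ] with P hP using diracImage_Vop_comp hφ hP ω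
  have : IsProbabilityMeasure (lam.map π) := Measure.isProbabilityMeasure_map hπ.aemeasurable
  have hμπ : μ = lam.map π := Measure.ext_of_forall_integral_continuousMap fun x => by
    rw [integral_map hπ.aemeasurable x.continuous.aestronglyMeasurable, hμ x]
    refine integral_congr_ae ?_
    filter_upwards [hΓ] with P hP
    rw [← diracSM_diracImage hφ hP, spair_diracSM]
  have hμerg : Ergodic φ μ := hμπ ▸ hlam.map_of_ae_semiconj hπ hφ.measurable hconj
  exact ⟨fun e he => hμerg.measure_preimage he.nullMeasurableSet,
    fun e he hφe => hμerg.prob_eq_zero_or_one he hφe⟩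
end

section
/- If there exists a countable set e ⊆ Ω such that every map p ∈ E(Ω,φ) is continuous at every point of Ω \ e, then the Ellis enveloping semigroup E(Ω,φ) is metrizable (i.e., the semicascade (Ω,φ) is ordinary). -/
open MeasureTheory Filter Topology

variable {Ω : Type*} [TopologicalSpace Ω] [CompactSpace Ω] [TopologicalSpace.MetrizableSpace Ω]
  [Nonempty Ω] [MeasurableSpace Ω] [BorelSpace Ω]

/-- Corollary 2.8: if there is a countable set `e ⊆ Ω` such that every `p ∈ E(Ω,φ)`
is continuous at every point outside `e`, then `E(Ω,φ)` is metrizable, i.e. the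
semicascade `(Ω,φ)` is ordinary. -/
theorem stmt_11 (φ : Ω → Ω) (hφ : Continuous φ)
    (h : ∃ e : Set Ω, e.Countable ∧ ∀ p ∈ EllisE φ, ∀ ω ∉ e, ContinuousAt p ω) :
    TopologicalSpace.MetrizableSpace (EllisE φ) := by
  haveI : T2Space Ω := letI := TopologicalSpace.metrizableSpaceMetric Ω; inferInstance
  obtain ⟨e, he, hce⟩ := h
  obtain ⟨D, hDc, hDd⟩ := TopologicalSpace.exists_countable_dense Ω
  set S : Set Ω := D ∪ e with hS
  haveI : Countable S := (hDc.union he).to_subtype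
  -- the restriction map
  let f : EllisE φ → (S → Ω) := fun p s => p.1 s.1
  have hfc : Continuous f := by
    apply continuous_pi
    intro s
    exact (continuous_apply (s.1 : Ω)).comp continuous_subtype_val
  have hfi : Function.Injective f := by
    rintro ⟨p, hp⟩ ⟨q, hq⟩ hpq
    have hagree : ∀ s ∈ S, p s = q s := by
      intro s hs
      exact congrFun hpq ⟨s, hs⟩
    ext ω
    by_cases hω : ω ∈ e
    · exact hagree ω (Or.inr hω)
    · have hpcont := hce p hp ω hω
      have hqcont := hce q hq ω hω
      have hne : (𝓝[D] ω).NeBot := mem_closure_iff_nhdsWithin_neBot.mp (hDd ω)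
      have hpt : Tendsto p (𝓝[D] ω) (𝓝 (p ω)) :=
        hpcont.tendsto.mono_left nhdsWithin_le_nhds
      have hqt : Tendsto p (𝓝[D] ω) (𝓝 (q ω)) := by
        refine Tendsto.congr' ?_ (hqcont.tendsto.mono_left nhdsWithin_le_nhds)
        filter_upwards [eventually_mem_nhdsWithin] with a ha
        exact (hagree a (Or.inl ha)).symm
      exact tendsto_nhds_unique hpt hqt
  haveI : CompactSpace (EllisE φ) :=
    isCompact_iff_compactSpace.mp (isClosed_closure.isCompact)
  have hemb := hfc.isClosedEmbedding hfi
  exact hemb.isEmbedding.metrizableSpace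
end

section
/- Suppose the Ellis enveloping semigroup E(Ω,φ) is metrizable. Let (I, ≤) be a directed set and let (T_i)_{i∈I} be a net of operators from the convex hull of {V^n : n ≥ 0} such that ⟨x, T_i μ⟩ − ⟨x, T_i(Vμ)⟩ → 0 for all x ∈ C(Ω,ℝ) and μ ∈ X* (an ergodic net). If for every x ∈ C(Ω,ℝ) and every ω ∈ Ω the net of real numbers ⟨x, T_i δ(ω)⟩ converges, then for every x ∈ C(Ω,ℝ) and every μ ∈ X* the net ⟨x, T_i μ⟩ converges; that is, the net (T_i) converges in the weak* operator topology. -/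
open MeasureTheory Filter Topology

variable {Ω : Type*} [TopologicalSpace Ω] [CompactSpace Ω] [TopologicalSpace.MetrizableSpace Ω]
  [Nonempty Ω] [MeasurableSpace Ω] [BorelSpace Ω]

/-! A map `T = Σ wₙ Vⁿ` of the convex hull is encoded by the functional `Λ = Σ wₙ δ_{φⁿ}` of
norm `≤ 1` on `C(E(Ω,φ))`: with the profile `ω ↦ Λ (p ↦ x (p ω)) = Σ wₙ x (φⁿ ω)` one has
`⟨x, T μ⟩ = ∫ profile dμ`. As `E(Ω,φ)` is compact metrizable, `C(E(Ω,φ))` is separable, so the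
weak* closure `K` of these functionals is compact metrizable. Hence every `Λ ∈ K` has a Borel
profile (a sequential limit of continuous ones), and by dominated convergence
`Λ ↦ ∫ profile dμ` is continuous on `K`. The profile map is a quotient map from `K` onto its
compact image in `ℝ^Ω`, so `μ`-integration is continuous on that image; the Dirac hypothesis
says exactly that the profiles of the `Tᵢ` converge pointwise. -/

open scoped NNReal

section Pairing

variable {α : Type*} [MeasurableSpace α]

theorem spair_def (f : α → ℝ) (σ : SignedMeasure α) :
    spair f σ = (∫ ω, f ω ∂σ.toJordanDecomposition.posPart)
      - ∫ ω, f ω ∂σ.toJordanDecomposition.negPart := rfl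

theorem SignedMeasure.eq_posPart_sub_negPart (σ : SignedMeasure α) :
    σ = σ.toJordanDecomposition.posPart.toSignedMeasure
      - σ.toJordanDecomposition.negPart.toSignedMeasure := by
  conv_lhs => rw [← σ.toSignedMeasure_toJordanDecomposition]
  rfl

theorem spair_smul_left (c : ℝ) (f : α → ℝ) (σ : SignedMeasure α) :
    spair (c • f) σ = c * spair f σ := by
  simp only [spair_def, Pi.smul_apply, smul_eq_mul, integral_const_mul, mul_sub]

variable [TopologicalSpace α] [CompactSpace α] [BorelSpace α] {f : α → ℝ}

theorem Continuous.integrable_of_compactSpace (hf : Continuous f) (ν : Measure α)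
    [IsFiniteMeasure ν] : Integrable f ν :=
  hf.integrable_of_hasCompactSupport (.of_compactSpace f)

theorem spair_eq_integral_sub_integral_s13 (hf : Continuous f) {a b : Measure α}
    [IsFiniteMeasure a] [IsFiniteMeasure b] {σ : SignedMeasure α}
    (hσ : σ = a.toSignedMeasure - b.toSignedMeasure) :
    spair f σ = (∫ ω, f ω ∂a) - ∫ ω, f ω ∂b := by
  set P := σ.toJordanDecomposition.posPart
  set N := σ.toJordanDecomposition.negPart
  have hPN : (P + b).toSignedMeasure = (N + a).toSignedMeasure := by
    have h := (SignedMeasure.eq_posPart_sub_negPart σ).symm.trans hσ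
    rw [sub_eq_sub_iff_add_eq_add] at h
    rw [Measure.toSignedMeasure_add, Measure.toSignedMeasure_add, h, add_comm]
  have h := congrArg (fun ν => ∫ ω, f ω ∂ν)
    (Measure.toSignedMeasure_eq_toSignedMeasure_iff.mp hPN)
  simp only [integral_add_measure (hf.integrable_of_compactSpace _)
    (hf.integrable_of_compactSpace _)] at h
  rw [spair_def]
  linarith

theorem spair_toSignedMeasure_s13 (hf : Continuous f) (a : Measure α) [IsFiniteMeasure a] :
    spair f a.toSignedMeasure = ∫ ω, f ω ∂a := by
  simpa using spair_eq_integral_sub_integral_s13 hf (b := 0) (by simp)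

theorem spair_dirac (hf : Continuous f) (ω : α) : spair f (diracSM ω) = f ω := by
  rw [diracSM, spair_toSignedMeasure_s13 hf, integral_dirac' f ω hf.stronglyMeasurable]

theorem spair_add (hf : Continuous f) (σ τ : SignedMeasure α) :
    spair f (σ + τ) = spair f σ + spair f τ := by
  have hστ : σ + τ = (σ.toJordanDecomposition.posPart
      + τ.toJordanDecomposition.posPart).toSignedMeasure
      - (σ.toJordanDecomposition.negPart + τ.toJordanDecomposition.negPart).toSignedMeasure := by
    rw [Measure.toSignedMeasure_add, Measure.toSignedMeasure_add]
    conv_lhs => rw [SignedMeasure.eq_posPart_sub_negPart σ,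
      SignedMeasure.eq_posPart_sub_negPart τ]
    abel
  rw [spair_eq_integral_sub_integral_s13 hf hστ,
    integral_add_measure (hf.integrable_of_compactSpace _) (hf.integrable_of_compactSpace _),
    integral_add_measure (hf.integrable_of_compactSpace _) (hf.integrable_of_compactSpace _),
    spair_def f σ, spair_def f τ]
  ring

theorem spair_smul (hf : Continuous f) {c : ℝ} (hc : 0 ≤ c) (σ : SignedMeasure α) :
    spair f (c • σ) = c * spair f σ := by
  lift c to ℝ≥0 using hc
  have hσ : (c : ℝ) • σ = (c • σ.toJordanDecomposition.posPart).toSignedMeasure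
      - (c • σ.toJordanDecomposition.negPart).toSignedMeasure := by
    rw [Measure.toSignedMeasure_smul, Measure.toSignedMeasure_smul]
    conv_lhs => rw [SignedMeasure.eq_posPart_sub_negPart σ]
    rw [smul_sub]
    rfl
  rw [spair_eq_integral_sub_integral_s13 hf hσ, integral_smul_nnreal_measure,
    integral_smul_nnreal_measure, spair_def, NNReal.smul_def, NNReal.smul_def, smul_eq_mul,
    smul_eq_mul, mul_sub]

theorem spair_map_s13 (hf : Continuous f) {p : α → α} (hp : Continuous p) (σ : SignedMeasure α) :
    spair f (σ.map p) = spair (f ∘ p) σ := by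
  have hσ : σ.map p = (σ.toJordanDecomposition.posPart.map p).toSignedMeasure
      - (σ.toJordanDecomposition.negPart.map p).toSignedMeasure := by
    ext e he
    rw [VectorMeasure.map_apply _ hp.measurable he]
    conv_lhs => rw [SignedMeasure.eq_posPart_sub_negPart σ]
    simp only [sub_apply,
      Measure.toSignedMeasure_apply_measurable he,
      Measure.toSignedMeasure_apply_measurable (hp.measurable he),
      Measure.map_apply hp.measurable he, measureReal_def]
  rw [spair_eq_integral_sub_integral_s13 hf hσ,
    integral_map hp.aemeasurable hf.stronglyMeasurable.aestronglyMeasurable,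
    integral_map hp.aemeasurable hf.stronglyMeasurable.aestronglyMeasurable, spair_def]
  rfl

theorem spair_add_left {g : α → ℝ} (hf : Continuous f) (hg : Continuous g)
    (σ : SignedMeasure α) : spair (f + g) σ = spair f σ + spair g σ := by
  simp only [spair_def, Pi.add_apply]
  rw [integral_add (hf.integrable_of_compactSpace _) (hg.integrable_of_compactSpace _),
    integral_add (hf.integrable_of_compactSpace _) (hg.integrable_of_compactSpace _)]
  ring

theorem spair_vop_iterate (hf : Continuous f) {φ : α → α} (hφ : Continuous φ) (n : ℕ)
    (σ : SignedMeasure α) : spair f ((Vop φ)^[n] σ) = spair (f ∘ φ^[n]) σ := by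
  induction n generalizing f with
  | zero => rfl
  | succ n ih =>
    rw [Function.iterate_succ_apply', Vop, spair_map_s13 hf hφ, ih (hf.comp hφ),
      Function.iterate_succ']
    rfl

end Pairing

section PointwiseLimits

variable {X Y Z : Type*} [TopologicalSpace X] [TopologicalSpace Y] [TopologicalSpace Z]

theorem IsCompact.continuousOn_image_of_comp [T2Space Y] {K : Set X} (hK : IsCompact K) {G : X → Y}
    (hG : ContinuousOn G K) {Ψ : Y → Z} (hΨ : ContinuousOn (Ψ ∘ G) K) :
    ContinuousOn Ψ (G '' K) := by
  have := isCompact_iff_compactSpace.mp hK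
  have hq : Topology.IsQuotientMap (K.imageFactorization G) :=
    .of_surjective_continuous Set.imageFactorization_surjective
      (hG.mapsToRestrict (Set.mapsTo_image G K))
  rw [continuousOn_iff_continuous_domRestrict, hq.continuous_iff]
  exact continuousOn_iff_continuous_domRestrict.mp hΨ

variable {α : Type*} [MeasurableSpace α] {G : X → α → ℝ}

theorem Measurable.of_mem_closure (hG : Continuous G) {A : Set X}
    [FirstCountableTopology (closure A)] (hA : ∀ a ∈ A, Measurable (G a)) {b : X}
    (hb : b ∈ closure A) : Measurable (G b) := by
  have hb' : (⟨b, hb⟩ : closure A) ∈ closure (Subtype.val ⁻¹' A) := by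
    rw [closure_subtype, Subtype.image_preimage_coe, Set.inter_eq_right.mpr subset_closure]
    exact hb
  obtain ⟨u, huA, hu⟩ := mem_closure_iff_seq_limit.mp hb'
  exact measurable_of_tendsto_metrizable (fun k => hA _ (huA k))
    ((hG.tendsto b).comp ((continuous_subtype_val.tendsto _).comp hu))

theorem continuousOn_integral_of_bounded (hG : Continuous G) {K : Set X} [SequentialSpace K]
    (hmeas : ∀ k ∈ K, Measurable (G k)) {B : ℝ} (hB : ∀ k ∈ K, ∀ ω, |G k ω| ≤ B)
    (ν : Measure α) [IsFiniteMeasure ν] : ContinuousOn (fun k => ∫ ω, G k ω ∂ν) K := by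
  rw [continuousOn_iff_continuous_domRestrict, continuous_iff_seqContinuous]
  intro u k hu
  refine tendsto_integral_of_dominated_convergence (fun _ => B)
    (fun n => (hmeas _ (u n).2).aestronglyMeasurable) (integrable_const B)
    (fun n => .of_forall fun ω => hB _ (u n).2 ω) (.of_forall fun ω => ?_)
  exact tendsto_pi_nhds.mp ((hG.tendsto k).comp ((continuous_subtype_val.tendsto _).comp hu)) ω

theorem tendsto_integral_of_tendsto_comp (hG : Continuous G) {K : Set X} (hK : IsCompact K)
    [SequentialSpace K] (hmeas : ∀ k ∈ K, Measurable (G k)) {B : ℝ}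
    (hB : ∀ k ∈ K, ∀ ω, |G k ω| ≤ B) (ν : Measure α) [IsFiniteMeasure ν]
    {ι : Type*} {l : Filter ι} {F : ι → X} (hF : ∀ i, F i ∈ K) {g : α → ℝ}
    (hFg : Tendsto (fun i => G (F i)) l (𝓝 g)) :
    Tendsto (fun i => ∫ ω, G (F i) ω ∂ν) l (𝓝 (∫ ω, g ω ∂ν)) := by
  rcases l.eq_or_neBot with rfl | _
  · exact tendsto_bot
  have hGF : ∀ᶠ i in l, G (F i) ∈ G '' K := .of_forall fun i => Set.mem_image_of_mem G (hF i)
  have hg : g ∈ G '' K := (hK.image hG).isClosed.mem_of_tendsto hFg hGF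
  have hΨ : ContinuousOn (fun h : α → ℝ => ∫ ω, h ω ∂ν) (G '' K) :=
    hK.continuousOn_image_of_comp hG.continuousOn (continuousOn_integral_of_bounded hG hmeas hB ν)
  exact (hΨ g hg).tendsto.comp (tendsto_nhdsWithin_iff.mpr ⟨hFg, hGF⟩)

end PointwiseLimits

section Enveloping

variable {α : Type*} [TopologicalSpace α]

instance EllisE.compactSpace [CompactSpace α] (φ : α → α) : CompactSpace (EllisE φ) :=
  isCompact_iff_compactSpace.mp isClosed_closure.isCompact

theorem iterate_mem_EllisE (φ : α → α) (n : ℕ) : φ^[n] ∈ EllisE φ :=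
  subset_closure ⟨n, rfl⟩

def evalAt (x : C(α, ℝ)) (φ : α → α) (ω : α) : C(EllisE φ, ℝ) :=
  x.comp ⟨fun p => p.1 ω, (continuous_apply ω).comp continuous_subtype_val⟩

noncomputable def dualProfile (x : C(α, ℝ)) (φ : α → α) (Λ : WeakDual ℝ C(EllisE φ, ℝ)) : α → ℝ :=
  fun ω => Λ (evalAt x φ ω)

variable (x : C(α, ℝ)) (φ : α → α)

theorem continuous_dualProfile : Continuous (dualProfile x φ) :=
  continuous_pi fun ω => WeakDual.eval_continuous (evalAt x φ ω)

variable [CompactSpace α]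

def continuousProfileBall : Set (WeakDual ℝ C(EllisE φ, ℝ)) :=
  WeakDual.toStrongDual ⁻¹' Metric.closedBall 0 1 ∩ {Λ | Continuous (dualProfile x φ Λ)}

theorem abs_dualProfile_le {Λ : WeakDual ℝ C(EllisE φ, ℝ)}
    (hΛ : Λ ∈ WeakDual.toStrongDual ⁻¹' Metric.closedBall 0 1) (ω : α) :
    |dualProfile x φ Λ ω| ≤ ‖x‖ := by
  have hev : ‖evalAt x φ ω‖ ≤ ‖x‖ :=
    (ContinuousMap.norm_le _ (norm_nonneg x)).mpr fun p => x.norm_coe_le_norm _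
  have := (WeakDual.toStrongDual Λ).le_of_opNorm_le (mem_closedBall_zero_iff.mp hΛ) (evalAt x φ ω)
  rw [one_mul] at this
  exact this.trans hev

variable [MeasurableSpace α] [BorelSpace α] {x φ}

theorem exists_dualProfile_of_mem_convexHull (hφ : Continuous φ)
    {T : SignedMeasure α → SignedMeasure α}
    (hT : T ∈ convexHull ℝ (Set.range fun n : ℕ => (Vop φ)^[n])) :
    ∃ Λ ∈ continuousProfileBall x φ, ∀ ν, spair x (T ν) = spair (dualProfile x φ Λ) ν := by
  let S : Set (SignedMeasure α → SignedMeasure α) := {T | ∃ Λ ∈ continuousProfileBall x φ,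
    ∀ ν, spair x (T ν) = spair (dualProfile x φ Λ) ν}
  have hsub : Set.range (fun n : ℕ => (Vop φ)^[n]) ⊆ S := by
    rintro _ ⟨n, rfl⟩
    refine ⟨StrongDual.toWeakDual (ContinuousMap.evalCLM ℝ ⟨φ^[n], iterate_mem_EllisE φ n⟩),
      ⟨?_, x.continuous.comp (hφ.iterate n)⟩, fun ν => spair_vop_iterate x.continuous hφ n ν⟩
    refine mem_closedBall_zero_iff (E := StrongDual ℝ C(EllisE φ, ℝ)) |>.mpr
      (ContinuousLinearMap.opNorm_le_bound _ zero_le_one fun f => ?_)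
    rw [one_mul]
    exact f.norm_coe_le_norm ⟨φ^[n], iterate_mem_EllisE φ n⟩
  have hconv : Convex ℝ S := by
    rintro T₁ ⟨Λ₁, ⟨hn₁, hc₁⟩, h₁⟩ T₂ ⟨Λ₂, ⟨hn₂, hc₂⟩, h₂⟩ a b ha hb hab
    have hlin : dualProfile x φ (a • Λ₁ + b • Λ₂)
        = a • dualProfile x φ Λ₁ + b • dualProfile x φ Λ₂ := by
      funext ω
      simp only [dualProfile, Pi.add_apply, Pi.smul_apply]
      rfl
    refine ⟨a • Λ₁ + b • Λ₂, ⟨?_, ?_⟩, fun ν => ?_⟩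
    · exact (convex_closedBall (0 : StrongDual ℝ C(EllisE φ, ℝ)) 1).linear_preimage
        (WeakDual.toStrongDual (𝕜 := ℝ) (E := C(EllisE φ, ℝ))).toLinearMap hn₁ hn₂ ha hb hab
    · show Continuous _
      rw [hlin]
      exact (hc₁.const_smul a).add (hc₂.const_smul b)
    · calc spair x ((a • T₁ + b • T₂) ν) = spair x (a • T₁ ν + b • T₂ ν) := rfl
        _ = a * spair x (T₁ ν) + b * spair x (T₂ ν) := by
          rw [spair_add x.continuous, spair_smul x.continuous ha, spair_smul x.continuous hb]
        _ = spair (dualProfile x φ (a • Λ₁ + b • Λ₂)) ν := by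
          rw [h₁, h₂, hlin, spair_add_left (hc₁.const_smul a) (hc₂.const_smul b),
            spair_smul_left, spair_smul_left]
  exact convexHull_min hsub hconv hT

end Enveloping

theorem stmt_13_general (φ : Ω → Ω) (hφ : Continuous φ)
    (hmet : TopologicalSpace.MetrizableSpace (EllisE φ))
    {I : Type*} [Preorder I]
    (T : I → SignedMeasure Ω → SignedMeasure Ω)
    (hmem : ∀ i, T i ∈ convexHull ℝ (Set.range fun n : ℕ => (Vop φ)^[n]))
    (hdirac : ∀ (x : C(Ω, ℝ)) (ω : Ω), ∃ c : ℝ,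
      Tendsto (fun i => spair (⇑x) (T i (diracSM ω))) atTop (𝓝 c)) :
    ∀ (x : C(Ω, ℝ)) (μ : SignedMeasure Ω), ∃ c : ℝ,
      Tendsto (fun i => spair (⇑x) (T i μ)) atTop (𝓝 c) := by
  intro x μ
  set K := closure (continuousProfileBall x φ)
  have hKball : K ⊆ WeakDual.toStrongDual ⁻¹' Metric.closedBall 0 1 :=
    closure_minimal (fun Λ hΛ => hΛ.1) (WeakDual.isClosed_closedBall 0 1)
  have hK : IsCompact K :=
    (WeakDual.isCompact_closedBall 0 1).of_isClosed_subset isClosed_closure hKball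
  have := WeakDual.metrizable_of_isCompact ℝ C(EllisE φ, ℝ) K hK
  choose F hFK hF using fun i => exists_dualProfile_of_mem_convexHull hφ (hmem i)
  choose g hg using hdirac x
  have hFg : Tendsto (fun i => dualProfile x φ (F i)) atTop (𝓝 g) :=
    tendsto_pi_nhds.mpr fun ω => (hg ω).congr fun i => by rw [hF i, spair_dirac (hFK i).2]
  have key (ν : Measure Ω) [IsFiniteMeasure ν] :=
    tendsto_integral_of_tendsto_comp (continuous_dualProfile x φ) hK
      (fun Λ hΛ => Measurable.of_mem_closure (continuous_dualProfile x φ)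
        (fun Λ' hΛ' => hΛ'.2.measurable) hΛ)
      (fun Λ hΛ => abs_dualProfile_le x φ (hKball hΛ)) ν (fun i => subset_closure (hFK i)) hFg
  refine ⟨spair g μ, ?_⟩
  simp only [hF, spair_def]
  exact (key _).sub (key _)

/-- Proposition 3.3: for an ordinary semicascade, an ergodic net of operators from the convex
hull of `{Vⁿ : n ≥ 0}` converges in the weak* operator topology as soon as the pairings
against Dirac measures converge. -/
theorem stmt_13 (φ : Ω → Ω) (hφ : Continuous φ)
    (hmet : TopologicalSpace.MetrizableSpace (EllisE φ))
    {I : Type*} [Nonempty I] [Preorder I] [IsDirected I (· ≤ ·)]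
    (T : I → SignedMeasure Ω → SignedMeasure Ω)
    (hmem : ∀ i, T i ∈ convexHull ℝ (Set.range fun n : ℕ => (Vop φ)^[n]))
    (herg : ∀ (x : C(Ω, ℝ)) (μ : SignedMeasure Ω),
      Tendsto (fun i => spair (⇑x) (T i μ) - spair (⇑x) (T i (Vop φ μ))) atTop (𝓝 0))
    (hdirac : ∀ (x : C(Ω, ℝ)) (ω : Ω), ∃ c : ℝ,
      Tendsto (fun i => spair (⇑x) (T i (diracSM ω))) atTop (𝓝 c)) :
    ∀ (x : C(Ω, ℝ)) (μ : SignedMeasure Ω), ∃ c : ℝ,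
      Tendsto (fun i => spair (⇑x) (T i μ)) atTop (𝓝 c) :=
  stmt_13_general φ hφ hmet T hmem hdirac
end

section
/- If the proximality relation P(Ω,φ) is transitive, then for every ω ∈ Ω the orbit closure of ω contains exactly one minimal set. -/
open MeasureTheory Filter Topology

variable {Ω : Type*} [MetricSpace Ω] [CompactSpace Ω] [Nonempty Ω]


section Aux

variable {Ω : Type*} [MetricSpace Ω] [CompactSpace Ω] [Nonempty Ω]

lemma proximal_symm (φ : Ω → Ω) {a b : Ω} (h : Proximal φ a b) : Proximal φ b a := by
  unfold Proximal at h ⊢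
  simpa [dist_comm] using h

lemma proximal_of_forall (φ : Ω → Ω) {a b : Ω}
    (h : ∀ ε > (0:ℝ), ∃ n, dist (φ^[n] a) (φ^[n] b) < ε) : Proximal φ a b := by
  have hbdd : BddBelow (Set.range fun n => dist (φ^[n] a) (φ^[n] b)) := by
    refine ⟨0, ?_⟩
    rintro _ ⟨n, rfl⟩
    exact dist_nonneg
  refine le_antisymm ?_ (le_ciInf fun n => dist_nonneg)
  refine le_of_forall_pos_le_add fun ε hε => ?_
  obtain ⟨n, hn⟩ := h ε hε
  calc (⨅ n : ℕ, dist (φ^[n] a) (φ^[n] b)) ≤ dist (φ^[n] a) (φ^[n] b) := ciInf_le hbdd n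
    _ ≤ 0 + ε := by linarith

lemma proximal_exists_small (φ : Ω → Ω) {a b : Ω} (h : Proximal φ a b) :
    ∀ ε > (0:ℝ), ∃ n, dist (φ^[n] a) (φ^[n] b) < ε := by
  intro ε hε
  have : (⨅ n : ℕ, dist (φ^[n] a) (φ^[n] b)) < ε := by rw [h]; exact hε
  exact exists_lt_of_ciInf_lt this

/-- Every nonempty closed invariant set contains a minimal set. -/
lemma exists_minimalSet_subset (φ : Ω → Ω) (hφ : Continuous φ) (X : Set Ω)
    (hne : X.Nonempty) (hcl : IsClosed X) (hinv : Set.MapsTo φ X X) :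
    ∃ m, IsMinimalSet φ m ∧ m ⊆ X := by
  set S : Set (Set Ω) :=
      {s | s ⊆ X ∧ s.Nonempty ∧ IsClosed s ∧ Set.MapsTo φ s s} with hS
  have hchainlb : ∀ c ⊆ S, IsChain (· ⊆ ·) c → c.Nonempty →
      ∃ lb ∈ S, ∀ s ∈ c, lb ⊆ s := by
    intro c hcS hchain hcne
    refine ⟨⋂₀ c, ⟨?_, ?_, ?_, ?_⟩, fun s hs => Set.sInter_subset_of_mem hs⟩
    · obtain ⟨t, ht⟩ := hcne
      exact (Set.sInter_subset_of_mem ht).trans (hcS ht).1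
    · have := @IsCompact.nonempty_iInter_of_directed_nonempty_isCompact_isClosed Ω _
        _ hcne.coe_sort ((↑) : c → Set Ω)
        (DirectedOn.directed_val (IsChain.directedOn hchain.symm))
        (fun i => (hcS i.prop).2.1) (fun i => (hcS i.prop).2.2.1.isCompact)
        (fun i => (hcS i.prop).2.2.1)
      rwa [Set.sInter_eq_iInter]
    · exact isClosed_sInter fun t ht => (hcS ht).2.2.1
    · intro x hx
      rw [Set.mem_sInter] at hx ⊢
      exact fun t ht => (hcS ht).2.2.2 (hx t ht)
  obtain ⟨m, hmX, hmin⟩ := zorn_superset_nonempty S hchainlb X ⟨le_refl X, hne, hcl, hinv⟩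
  obtain ⟨hm1, hm2, hm3, hm4⟩ := hmin.prop
  refine ⟨m, ⟨hm2, hm3, hm4, ?_⟩, hm1⟩
  intro m' hm' hne' hcl' hinv'
  exact hmin.eq_of_subset ⟨hm'.trans hm1, hne', hcl', hinv'⟩ hm'

lemma ellis_apply_mem (φ : Ω → Ω) {m : Set Ω} (hcl : IsClosed m)
    (hinv : Set.MapsTo φ m m) {f : Ω → Ω} (hf : f ∈ EllisE φ) {a : Ω} (ha : a ∈ m) :
    f a ∈ m := by
  have hsub : EllisE φ ⊆ {g : Ω → Ω | g a ∈ m} := by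
    apply closure_minimal
    · rintro _ ⟨n, rfl⟩
      exact (hinv.iterate n) ha
    · exact hcl.preimage (continuous_apply a)
  exact hsub hf

lemma ellis_comp_mem (φ : Ω → Ω) (hφ : Continuous φ) {f g : Ω → Ω}
    (hf : f ∈ EllisE φ) (hg : g ∈ EllisE φ) : g ∘ f ∈ EllisE φ := by
  have step1 : ∀ n : ℕ, φ^[n] ∘ f ∈ EllisE φ := by
    intro n
    have hcont : Continuous fun h : Ω → Ω => φ^[n] ∘ h :=
      continuous_pi fun x => (hφ.iterate n).comp (continuous_apply x)
    have himg : (fun h : Ω → Ω => φ^[n] ∘ h) '' closure (Set.range fun k : ℕ => φ^[k]) ⊆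
        closure ((fun h : Ω → Ω => φ^[n] ∘ h) '' Set.range fun k : ℕ => φ^[k]) :=
      image_closure_subset_closure_image hcont
    have hmem : φ^[n] ∘ f ∈
        closure ((fun h : Ω → Ω => φ^[n] ∘ h) '' Set.range fun k : ℕ => φ^[k]) :=
      himg ⟨f, hf, rfl⟩
    refine closure_mono ?_ hmem
    rintro _ ⟨_, ⟨k, rfl⟩, rfl⟩
    exact ⟨n + k, by simp [Function.iterate_add]⟩
  have hcont : Continuous fun h : Ω → Ω => h ∘ f :=
    continuous_pi fun x => continuous_apply (f x)
  have himg : (fun h : Ω → Ω => h ∘ f) '' closure (Set.range fun k : ℕ => φ^[k]) ⊆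
      closure ((fun h : Ω → Ω => h ∘ f) '' Set.range fun k : ℕ => φ^[k]) :=
    image_closure_subset_closure_image hcont
  have hmem : g ∘ f ∈ closure ((fun h : Ω → Ω => h ∘ f) '' Set.range fun k : ℕ => φ^[k]) :=
    himg ⟨g, hg, rfl⟩
  have hsub : ((fun h : Ω → Ω => h ∘ f) '' Set.range fun k : ℕ => φ^[k]) ⊆ EllisE φ := by
    rintro _ ⟨_, ⟨k, rfl⟩, rfl⟩
    exact step1 k
  have : closure ((fun h : Ω → Ω => h ∘ f) '' Set.range fun k : ℕ => φ^[k]) ⊆ EllisE φ :=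
    closure_minimal hsub isClosed_closure
  exact this hmem

lemma ellis_exists_eval (φ : Ω → Ω) (hφ : Continuous φ) (ω : Ω) {p : Ω}
    (hp : p ∈ orbitClosure φ ω) : ∃ f ∈ EllisE φ, f ω = p := by
  have hEc : IsCompact (EllisE φ) := isClosed_closure.isCompact
  have himc : IsCompact ((fun f : Ω → Ω => f ω) '' EllisE φ) :=
    hEc.image (continuous_apply ω)
  have hsub : orbitClosure φ ω ⊆ (fun f : Ω → Ω => f ω) '' EllisE φ := by
    apply closure_minimal
    · rintro _ ⟨n, rfl⟩
      exact ⟨φ^[n], subset_closure ⟨n, rfl⟩, rfl⟩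
    · exact himc.isClosed
  obtain ⟨f, hf, hfω⟩ := hsub hp
  exact ⟨f, hf, hfω⟩

/-- Auslander–Ellis: every point is proximal to a point of any minimal set in its
orbit closure. -/
lemma exists_proximal_in_minimal (φ : Ω → Ω) (hφ : Continuous φ) (ω : Ω) {m : Set Ω}
    (hm : IsMinimalSet φ m) (hsub : m ⊆ orbitClosure φ ω) :
    ∃ p ∈ m, Proximal φ ω p := by
  obtain ⟨hne, hcl, hinv, _⟩ := hm
  letI : Semigroup (Ω → Ω) :=
    { mul := fun f g => f ∘ g
      mul_assoc := fun _ _ _ => rfl }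
  have hmul_left : ∀ r : Ω → Ω, Continuous (· * r) :=
    fun r => continuous_pi fun x => continuous_apply (r x)
  set S : Set (Ω → Ω) := {f ∈ EllisE φ | f ω ∈ m} with hSdef
  have hSne : S.Nonempty := by
    obtain ⟨p, hp⟩ := hne
    obtain ⟨f, hf, hfω⟩ := ellis_exists_eval φ hφ ω (hsub hp)
    exact ⟨f, hf, hfω ▸ hp⟩
  have hScomp : IsCompact S := by
    have : IsClosed S :=
      isClosed_closure.inter (hcl.preimage (continuous_apply ω))
    exact this.isCompact
  have hSmul : ∀ x ∈ S, ∀ y ∈ S, x * y ∈ S := by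
    rintro x ⟨hxE, hxm⟩ y ⟨hyE, hym⟩
    refine ⟨ellis_comp_mem φ hφ hyE hxE, ?_⟩
    exact ellis_apply_mem φ hcl hinv hxE hym
  obtain ⟨u, huS, huu⟩ :=
    exists_idempotent_in_compact_subsemigroup hmul_left S hSne hScomp hSmul
  obtain ⟨huE, hum⟩ := huS
  refine ⟨u ω, hum, proximal_of_forall φ fun ε hε => ?_⟩
  have huωω : u (u ω) = u ω := congrFun huu ω
  -- use the continuous map g ↦ (g ω, g (u ω))
  have hcont : Continuous fun g : Ω → Ω => ((g ω, g (u ω)) : Ω × Ω) :=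
    (continuous_apply ω).prodMk (continuous_apply (u ω))
  have hmem : ((u ω, u (u ω)) : Ω × Ω) ∈
      closure ((fun g : Ω → Ω => ((g ω, g (u ω)) : Ω × Ω)) ''
        Set.range fun n : ℕ => φ^[n]) :=
    image_closure_subset_closure_image hcont ⟨u, huE, rfl⟩
  rw [Metric.mem_closure_iff] at hmem
  obtain ⟨y, ⟨_, ⟨n, rfl⟩, rfl⟩, hy⟩ := hmem (ε / 2) (by linarith)
  rw [Prod.dist_eq] at hy
  have h1 : dist (u ω) (φ^[n] ω) < ε / 2 := lt_of_le_of_lt (le_max_left _ _) hy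
  have h2 : dist (u (u ω)) (φ^[n] (u ω)) < ε / 2 := lt_of_le_of_lt (le_max_right _ _) hy
  refine ⟨n, ?_⟩
  calc dist (φ^[n] ω) (φ^[n] (u ω))
      ≤ dist (φ^[n] ω) (u ω) + dist (u ω) (φ^[n] (u ω)) := dist_triangle _ _ _
    _ = dist (u ω) (φ^[n] ω) + dist (u (u ω)) (φ^[n] (u ω)) := by rw [dist_comm, huωω]
    _ < ε / 2 + ε / 2 := by linarith
    _ = ε := by ring

end Aux

/-- Lemma 3.7: if the proximality relation `P(Ω,φ)` is transitive, then the orbit closure of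
every point contains exactly one minimal set. -/
theorem stmt_17 (φ : Ω → Ω) (hφ : Continuous φ)
    (htrans : ∀ a b c : Ω, Proximal φ a b → Proximal φ b c → Proximal φ a c) :
    ∀ ω : Ω, ∃! m : Set Ω, IsMinimalSet φ m ∧ m ⊆ orbitClosure φ ω := by
  intro ω
  have hXne : (orbitClosure φ ω).Nonempty := ⟨ω, subset_closure ⟨0, by simp⟩⟩
  have hXcl : IsClosed (orbitClosure φ ω) := isClosed_closure
  have hXinv : Set.MapsTo φ (orbitClosure φ ω) (orbitClosure φ ω) := by
    have h0 : Set.MapsTo φ (Set.range fun n : ℕ => φ^[n] ω)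
        (Set.range fun n : ℕ => φ^[n] ω) := by
      rintro _ ⟨n, rfl⟩
      exact ⟨n + 1, by simp [Function.iterate_succ_apply']⟩
    exact h0.closure hφ
  obtain ⟨m, hm, hmsub⟩ := exists_minimalSet_subset φ hφ _ hXne hXcl hXinv
  refine ⟨m, ⟨hm, hmsub⟩, ?_⟩
  rintro m' ⟨hm', hm'sub⟩
  obtain ⟨p, hpm, hp⟩ := exists_proximal_in_minimal φ hφ ω hm hmsub
  obtain ⟨p', hp'm, hp'⟩ := exists_proximal_in_minimal φ hφ ω hm' hm'sub
  have hpp' : Proximal φ p' p := htrans p' ω p (proximal_symm φ hp') hp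
  have hsmall := proximal_exists_small φ hpp'
  choose n hn using fun k : ℕ => hsmall (1 / (k + 1)) (by positivity)
  obtain ⟨a, ham', ψ, hψ, hconv⟩ := hm'.2.1.isCompact.tendsto_subseq
    (x := fun k => φ^[n k] p') (fun k => (hm'.2.2.1.iterate (n k)) hp'm)
  have hd1 : Tendsto (fun k => dist (φ^[n (ψ k)] p') a) atTop (𝓝 0) :=
    tendsto_iff_dist_tendsto_zero.mp hconv
  have hd2 : Tendsto (fun k : ℕ => (1 : ℝ) / (k + 1)) atTop (𝓝 0) :=
    tendsto_one_div_add_atTop_nhds_zero_nat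
  have hb : Tendsto (fun k => dist (φ^[n (ψ k)] p) a) atTop (𝓝 0) := by
    refine squeeze_zero (fun k => dist_nonneg)
      (g := fun k => 1 / (k + 1) + dist (φ^[n (ψ k)] p') a) (fun k => ?_) ?_
    · have h1 : dist (φ^[n (ψ k)] p) (φ^[n (ψ k)] p') < 1 / (ψ k + 1) := by
        rw [dist_comm]; exact hn (ψ k)
      have h2 : (1 : ℝ) / (ψ k + 1) ≤ 1 / (k + 1) := by
        apply one_div_le_one_div_of_le (by positivity)
        have hk : k ≤ ψ k := hψ.le_apply
        have : (k : ℝ) ≤ ψ k := Nat.cast_le.mpr hk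
        linarith
      calc dist (φ^[n (ψ k)] p) a
          ≤ dist (φ^[n (ψ k)] p) (φ^[n (ψ k)] p') + dist (φ^[n (ψ k)] p') a :=
            dist_triangle _ _ _
        _ ≤ 1 / (k + 1) + dist (φ^[n (ψ k)] p') a := by linarith
    · simpa using hd2.add hd1
  have hconv2 : Tendsto (fun k => φ^[n (ψ k)] p) atTop (𝓝 a) :=
    tendsto_iff_dist_tendsto_zero.mpr hb
  have ham : a ∈ m := by
    refine hm.2.1.mem_of_tendsto hconv2 (Filter.Eventually.of_forall fun k => ?_)
    exact (hm.2.2.1.iterate (n (ψ k))) hpm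
  have hint : (m' ∩ m).Nonempty := ⟨a, ham', ham⟩
  have hintcl : IsClosed (m' ∩ m) := hm'.2.1.inter hm.2.1
  have hintinv : Set.MapsTo φ (m' ∩ m) (m' ∩ m) := fun x hx =>
    ⟨hm'.2.2.1 hx.1, hm.2.2.1 hx.2⟩
  have h1 : m' ∩ m = m' :=
    hm'.2.2.2 _ Set.inter_subset_left hint hintcl hintinv
  have h2 : m' ∩ m = m :=
    hm.2.2.2 _ Set.inter_subset_right hint hintcl hintinv
  rw [← h1, h2]
end

section
/- If the Ellis enveloping semigroup E(Ω,φ) is metrizable, then there exists a strictly increasing sequence n(1) < n(2) < ⋯ of positive integers such that for every x ∈ C(Ω,ℝ) and every finite signed Borel measure μ on Ω the Cesàro averages (1/n(k)) Σ_{j=0}^{n(k)−1} ∫ x∘φ^j dμ converge as k → ∞. -/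
open MeasureTheory Filter Topology

variable {Ω : Type*} [TopologicalSpace Ω] [CompactSpace Ω] [TopologicalSpace.MetrizableSpace Ω]
  [Nonempty Ω] [MeasurableSpace Ω] [BorelSpace Ω]


section AuxStmt18

lemma iterate_mem_EllisE_s18 {Ω : Type*} [TopologicalSpace Ω] (φ : Ω → Ω) (j : ℕ) :
    φ^[j] ∈ EllisE φ :=
  subset_closure ⟨j, rfl⟩

/-- The Cesàro-average functional on `C(E(Ω,φ), ℝ)`. -/
noncomputable def Lfun {Ω : Type*} [TopologicalSpace Ω] (φ : Ω → Ω) (n : ℕ)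
    (f : C(EllisE φ, ℝ)) : ℝ :=
  (n : ℝ)⁻¹ * ∑ j ∈ Finset.range n, f ⟨φ^[j], iterate_mem_EllisE_s18 φ j⟩

lemma abs_Lfun_le {Ω : Type*} [TopologicalSpace Ω] (φ : Ω → Ω) (n : ℕ)
    (f : C(EllisE φ, ℝ)) (C : ℝ) (hC : 0 ≤ C) (h : ∀ e : EllisE φ, |f e| ≤ C) :
    |Lfun φ n f| ≤ C := by
  rcases Nat.eq_zero_or_pos n with hn | hn
  · simp [Lfun, hn, hC]
  have h1 : |∑ j ∈ Finset.range n, f ⟨φ^[j], iterate_mem_EllisE_s18 φ j⟩| ≤ (n : ℝ) * C := by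
    calc |∑ j ∈ Finset.range n, f ⟨φ^[j], iterate_mem_EllisE_s18 φ j⟩|
        ≤ ∑ j ∈ Finset.range n, |f ⟨φ^[j], iterate_mem_EllisE_s18 φ j⟩| :=
          Finset.abs_sum_le_sum_abs _ _
      _ ≤ ∑ _j ∈ Finset.range n, C := Finset.sum_le_sum fun j _ => h _
      _ = (n : ℝ) * C := by simp [Finset.sum_const, nsmul_eq_mul]
  have hn' : (n : ℝ) ≠ 0 := Nat.cast_ne_zero.mpr hn.ne'
  calc |Lfun φ n f| = (n : ℝ)⁻¹ * |∑ j ∈ Finset.range n, f ⟨φ^[j], iterate_mem_EllisE_s18 φ j⟩| := by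
        rw [Lfun, abs_mul, abs_inv, Nat.abs_cast]
    _ ≤ (n : ℝ)⁻¹ * ((n : ℝ) * C) := by gcongr
    _ = C := inv_mul_cancel_left₀ hn' C

lemma Lfun_sub {Ω : Type*} [TopologicalSpace Ω] (φ : Ω → Ω) (n : ℕ)
    (f g : C(EllisE φ, ℝ)) : Lfun φ n f - Lfun φ n g = Lfun φ n (f - g) := by
  simp [Lfun, ContinuousMap.sub_apply, Finset.sum_sub_distrib, mul_sub]

lemma abs_Lfun_sub_le {Ω : Type*} [TopologicalSpace Ω]
    (φ : Ω → Ω) [CompactSpace (EllisE φ)] [MetricSpace (EllisE φ)] (n : ℕ)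
    (f g : C(EllisE φ, ℝ)) : |Lfun φ n f - Lfun φ n g| ≤ dist f g := by
  rw [Lfun_sub]
  refine abs_Lfun_le φ n (f - g) (dist f g) dist_nonneg fun e => ?_
  have h := ContinuousMap.dist_apply_le_dist (f := f) (g := g) e
  rw [Real.dist_eq] at h
  simpa [ContinuousMap.sub_apply] using h

end AuxStmt18

/-- Proposition 3.9 (first part): for an ordinary semicascade, the sequence of Cesàro means
contains a convergent subsequence: there is a strictly increasing sequence of positive
integers `n(1) < n(2) < ⋯` along which the Cesàro averages
`(1/n(k)) Σ_{j<n(k)} ∫ x ∘ φ^j dμ` converge for all `x ∈ C(Ω,ℝ)` and all `μ ∈ X*`. -/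
theorem stmt_18 (φ : Ω → Ω) (hφ : Continuous φ)
    (hmet : TopologicalSpace.MetrizableSpace (EllisE φ)) :
    ∃ n : ℕ → ℕ, StrictMono n ∧ (∀ k, 0 < n k) ∧
      ∀ (x : C(Ω, ℝ)) (μ : SignedMeasure Ω), ∃ c : ℝ,
        Tendsto
          (fun k => (n k : ℝ)⁻¹ * ∑ j ∈ Finset.range (n k), spair (fun ω => x (φ^[j] ω)) μ)
          atTop (𝓝 c) := by
  classical
  -- `E(Ω,φ)` is a compact metrizable space
  haveI hEc : CompactSpace (EllisE φ) :=
    isCompact_iff_compactSpace.mp isClosed_closure.isCompact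
  haveI := hmet
  letI : MetricSpace (EllisE φ) := TopologicalSpace.metrizableSpaceMetric (EllisE φ)
  haveI : Nonempty C(EllisE φ, ℝ) := ⟨0⟩
  set f : ℕ → C(EllisE φ, ℝ) := TopologicalSpace.denseSeq C(EllisE φ, ℝ) with hf
  have hdense : DenseRange f := TopologicalSpace.denseRange_denseSeq _
  have hmem : ∀ (n i : ℕ), Lfun φ (n + 1) (f i) ∈ Set.Icc (-‖f i‖) ‖f i‖ := by
    intro n i
    have h := abs_Lfun_le φ (n + 1) (f i) ‖f i‖ (norm_nonneg _) fun e => by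
      simpa [Real.norm_eq_abs] using (f i).norm_coe_le_norm e
    exact abs_le.mp h
  set v : ℕ → (∀ i : ℕ, Set.Icc (-‖f i‖) ‖f i‖) := fun n i => ⟨Lfun φ (n + 1) (f i), hmem n i⟩
    with hv
  obtain ⟨a, ψ, hψmono, hψconv⟩ := CompactSpace.tendsto_subseq v
  have hcoord : ∀ i, Tendsto (fun k => Lfun φ (ψ k + 1) (f i)) atTop (𝓝 (a i : ℝ)) := by
    intro i
    have h1 : Tendsto (fun k => (v ∘ ψ) k i) atTop (𝓝 (a i)) :=
      (((continuous_apply i).tendsto a).comp hψconv)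
    exact ((continuous_subtype_val.tendsto (a i)).comp h1)
  have key : ∀ F : C(EllisE φ, ℝ), ∃ c, Tendsto (fun k => Lfun φ (ψ k + 1) F) atTop (𝓝 c) := by
    intro F
    apply cauchySeq_tendsto_of_complete
    rw [Metric.cauchySeq_iff]
    intro ε hε
    obtain ⟨i, hi⟩ := Metric.denseRange_iff.mp hdense F (ε / 3) (by linarith)
    obtain ⟨N, hN⟩ := Metric.cauchySeq_iff.mp (hcoord i).cauchySeq (ε / 3) (by linarith)
    refine ⟨N, fun m hm n hn => ?_⟩
    have l1 : ∀ k, dist (Lfun φ (ψ k + 1) F) (Lfun φ (ψ k + 1) (f i)) < ε / 3 := fun k => by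
      rw [Real.dist_eq]
      exact lt_of_le_of_lt (abs_Lfun_sub_le φ _ F (f i)) hi
    calc dist (Lfun φ (ψ m + 1) F) (Lfun φ (ψ n + 1) F)
        ≤ dist (Lfun φ (ψ m + 1) F) (Lfun φ (ψ m + 1) (f i))
          + dist (Lfun φ (ψ m + 1) (f i)) (Lfun φ (ψ n + 1) (f i))
          + dist (Lfun φ (ψ n + 1) (f i)) (Lfun φ (ψ n + 1) F) := dist_triangle4 _ _ _ _
      _ < ε / 3 + ε / 3 + ε / 3 :=
          add_lt_add (add_lt_add (l1 m) (hN m hm n hn)) (by rw [dist_comm]; exact l1 n)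
      _ = ε := by ring
  refine ⟨fun k => ψ k + 1, fun i j hij => Nat.add_lt_add_right (hψmono hij) 1,
    fun k => Nat.succ_pos _, ?_⟩
  intro x μ
  set P := μ.toJordanDecomposition.posPart with hPdef
  set N := μ.toJordanDecomposition.negPart with hNdef
  have hFc : ∀ ω : Ω, Continuous fun p : EllisE φ => x (p.1 ω) :=
    fun ω => x.continuous.comp ((continuous_apply ω).comp continuous_subtype_val)
  set Fc : Ω → C(EllisE φ, ℝ) := fun ω => ⟨fun p => x (p.1 ω), hFc ω⟩ with hFcdef
  choose g hg using fun ω => key (Fc ω)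
  set G : ℕ → Ω → ℝ := fun k ω => Lfun φ (ψ k + 1) (Fc ω) with hG
  have hGeq : ∀ k, G k = fun ω =>
      ((ψ k + 1 : ℕ) : ℝ)⁻¹ * ∑ j ∈ Finset.range (ψ k + 1), x (φ^[j] ω) := fun k => rfl
  have hGcont : ∀ k, Continuous (G k) := by
    intro k
    rw [hGeq k]
    exact continuous_const.mul (continuous_finset_sum _ fun j _ =>
      x.continuous.comp (hφ.iterate j))
  have hGbound : ∀ k ω, |G k ω| ≤ ‖x‖ := fun k ω =>
    abs_Lfun_le φ _ (Fc ω) ‖x‖ (norm_nonneg x) fun e => by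
      simpa [Real.norm_eq_abs, hFcdef] using x.norm_coe_le_norm (e.1 ω)
  have hInt : ∀ (ν : Measure Ω), IsFiniteMeasure ν →
      Tendsto (fun k => ∫ ω, G k ω ∂ν) atTop (𝓝 (∫ ω, g ω ∂ν)) := by
    intro ν hν
    exact tendsto_integral_of_dominated_convergence (fun _ => ‖x‖)
      (fun k => (hGcont k).aestronglyMeasurable)
      (integrable_const _)
      (fun k => Filter.Eventually.of_forall fun ω => by
        rw [Real.norm_eq_abs]; exact hGbound k ω)
      (Filter.Eventually.of_forall hg)
  refine ⟨∫ ω, g ω ∂P - ∫ ω, g ω ∂N, ?_⟩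
  have hfinal := (hInt P inferInstance).sub (hInt N inferInstance)
  refine hfinal.congr fun k => ?_
  have hint : ∀ (j : ℕ) (ν : Measure Ω), IsFiniteMeasure ν →
      Integrable (fun ω => x (φ^[j] ω)) ν := fun j ν hν =>
    (x.continuous.comp (hφ.iterate j)).integrable_of_hasCompactSupport
      (HasCompactSupport.of_compactSpace _)
  have expand : ∀ (ν : Measure Ω), IsFiniteMeasure ν →
      ∫ ω, G k ω ∂ν =
        ((ψ k + 1 : ℕ) : ℝ)⁻¹ * ∑ j ∈ Finset.range (ψ k + 1), ∫ ω, x (φ^[j] ω) ∂ν := by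
    intro ν hν
    rw [hGeq k, MeasureTheory.integral_const_mul, integral_finset_sum _ fun j _ => hint j ν hν]
  rw [expand P inferInstance, expand N inferInstance]
  simp only [spair, ← hPdef, ← hNdef, Finset.sum_sub_distrib, mul_sub]
end
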